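/- Let F : ℝⁿ → Y be 6-Lipschitz on ℝⁿ and (1+ε)-Lipschitz on (1/2)B_X for some ε ∈ (0,1). If 0 < t < ε/(25√n), then for all x, y ∈ (1/4)B_X, ‖P_t * F(x) − P_t * F(y)‖_Y ≤ (1 + 2ε)‖x − y‖_X, using the tail bound ∫_{ℝⁿ \ rB_X} P_t ≤ t√n/r. -/

import Mathlib

open Real MeasureTheory

/-- The `n`-dimensional Poisson kernel. -/
noncomputable def poissonKernelRn (n : ℕ) (t : ℝ) (x : EuclideanSpace ℝ (Fin n)) : ℝ :=
  (Real.Gamma (((n : ℝ) + 1) / 2) / Real.pi ^ (((n : ℝ) + 1) / 2)) * t /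
    (t ^ 2 + ‖x‖ ^ 2) ^ (((n : ℝ) + 1) / 2)

/-- The Poisson evolute `P_t * F` of a vector-valued map `F`. -/
noncomputable def poissonConv {Y : Type*} [NormedAddCommGroup Y] [NormedSpace ℝ Y]
    [CompleteSpace Y] (n : ℕ) (t : ℝ) (F : EuclideanSpace ℝ (Fin n) → Y)
    (x : EuclideanSpace ℝ (Fin n)) : Y :=
  ∫ y, poissonKernelRn n t (x - y) • F y


section Helpers
open Set intervalIntegral

noncomputable def Wal (k : ℕ) : ℝ := ∫ x in (0:ℝ)..(π/2), Real.sin x ^ k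

lemma Wal_zero : Wal 0 = π / 2 := by simp [Wal]

lemma Wal_one : Wal 1 = 1 := by simp [Wal, integral_sin]

lemma Wal_succ_succ (k : ℕ) : Wal (k+2) = (k+1)/(k+2) * Wal k := by
  have := integral_sin_pow (a := 0) (b := π/2) k
  simp only [Real.sin_zero, Real.cos_pi_div_two, Real.sin_pi_div_two] at this
  simpa [Wal, zero_pow, Nat.succ_ne_zero] using this

lemma Wal_gamma : ∀ k : ℕ, Wal k = Real.sqrt π * Real.Gamma ((k+1)/2) / (2 * Real.Gamma ((k+2)/2)) := by
  have key : ∀ k : ℕ, Wal k = Real.sqrt π * Real.Gamma ((k+1)/2) / (2 * Real.Gamma ((k+2)/2)) ∧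
      Wal (k+1) = Real.sqrt π * Real.Gamma ((k+2)/2) / (2 * Real.Gamma ((k+3)/2)) := by
    intro k
    induction k with
    | zero =>
      have h32 : Real.Gamma ((3:ℝ)/2) = Real.sqrt π / 2 := by
        have h := Real.Gamma_add_one (s := (1:ℝ)/2) (by norm_num)
        rw [show (1:ℝ)/2 + 1 = 3/2 by norm_num] at h
        rw [h, Real.Gamma_one_half_eq]; ring
      have hs : Real.sqrt π ≠ 0 := by positivity
      constructor
      · rw [Wal_zero]
        simp only [Nat.cast_zero, zero_add]
        rw [show ((1:ℝ))/2 = 1/2 by norm_num, show ((2:ℝ))/2 = 1 by norm_num,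
          Real.Gamma_one, mul_one, Real.Gamma_one_half_eq,
          Real.mul_self_sqrt Real.pi_pos.le]
      · rw [Wal_one]
        simp only [Nat.cast_zero, zero_add]
        rw [show ((2:ℝ))/2 = 1 by norm_num, show ((3:ℝ))/2 = 3/2 by norm_num,
          Real.Gamma_one, h32]
        field_simp
    | succ k ih =>
      have hG1 : Real.Gamma (((k:ℝ)+3)/2) = ((k+1)/2) * Real.Gamma (((k:ℝ)+1)/2) := by
        have := Real.Gamma_add_one (s := ((k:ℝ)+1)/2) (by positivity)
        rw [show ((k:ℝ)+1)/2 + 1 = ((k:ℝ)+3)/2 by ring] at this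
        rw [this]
      have hG2 : Real.Gamma (((k:ℝ)+4)/2) = ((k+2)/2) * Real.Gamma (((k:ℝ)+2)/2) := by
        have := Real.Gamma_add_one (s := ((k:ℝ)+2)/2) (by positivity)
        rw [show ((k:ℝ)+2)/2 + 1 = ((k:ℝ)+4)/2 by ring] at this
        rw [this]
      have e1 : Real.Gamma (((k:ℝ)+1)/2) > 0 := Real.Gamma_pos_of_pos (by positivity)
      have e2 : Real.Gamma (((k:ℝ)+2)/2) > 0 := Real.Gamma_pos_of_pos (by positivity)
      simp only [Nat.cast_succ]
      rw [show ((k:ℝ)+1+1)/2 = ((k:ℝ)+2)/2 by ring, show ((k:ℝ)+1+2)/2 = ((k:ℝ)+3)/2 by ring,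
        show ((k:ℝ)+1+3)/2 = ((k:ℝ)+4)/2 by ring]
      refine ⟨ih.2, ?_⟩
      have hrec : Wal (k+2) = ((k:ℝ)+1)/((k:ℝ)+2) * Wal k := by
        have := Wal_succ_succ k; push_cast at this; exact this
      rw [show k+1+1 = k+2 from rfl, hrec, ih.1, hG1, hG2]
      field_simp
  exact fun k => (key k).1

lemma Wal_nonneg (k : ℕ) : 0 ≤ Wal k := by
  apply intervalIntegral.integral_nonneg (by positivity)
  intro x hx
  exact pow_nonneg (Real.sin_nonneg_of_nonneg_of_le_pi hx.1 (by linarith [hx.2, Real.pi_pos])) _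

lemma Wal_anti (k : ℕ) : Wal (k+1) ≤ Wal k := by
  apply intervalIntegral.integral_mono_on (by positivity)
  · apply Continuous.intervalIntegrable; continuity
  · apply Continuous.intervalIntegrable; continuity
  · intro x hx
    exact pow_le_pow_of_le_one
      (Real.sin_nonneg_of_nonneg_of_le_pi hx.1 (by linarith [hx.2, Real.pi_pos]))
      (Real.sin_le_one x) (Nat.le_succ k)

lemma Wal_mul (k : ℕ) : Wal k * Wal (k+1) = π / (2*(k+1)) := by
  induction k with
  | zero => simp [Wal_zero, Wal_one]
  | succ k ih =>
    have hrec : Wal (k+2) = ((k:ℝ)+1)/((k:ℝ)+2) * Wal k := by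
      have := Wal_succ_succ k; push_cast at this; exact this
    rw [show k+1+1 = k+2 from rfl, hrec]
    push_cast
    rw [show Wal (k+1) * (((k:ℝ)+1)/((k:ℝ)+2) * Wal k) = ((k:ℝ)+1)/((k:ℝ)+2) * (Wal k * Wal (k+1)) by ring, ih]
    field_simp
    ring

lemma Wal_ge (k : ℕ) : 1 / Real.sqrt (k+1) ≤ Wal k := by
  have h1 : π / (2*((k:ℝ)+1)) ≤ Wal k * Wal k := by
    calc π / (2*((k:ℝ)+1)) = Wal k * Wal (k+1) := (Wal_mul k).symm
    _ ≤ Wal k * Wal k := mul_le_mul_of_nonneg_left (Wal_anti k) (Wal_nonneg k)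
  have h2 : 1/((k:ℝ)+1) ≤ Wal k * Wal k := by
    refine le_trans ?_ h1
    rw [div_le_div_iff₀ (by positivity) (by positivity)]
    nlinarith [Real.pi_gt_three]
  have h3 : Real.sqrt (1/((k:ℝ)+1)) ≤ Wal k := by
    rw [show Wal k = Real.sqrt (Wal k * Wal k) from (Real.sqrt_mul_self (Wal_nonneg k)).symm]
    exact Real.sqrt_le_sqrt h2
  rwa [Real.sqrt_div' 1 (by positivity), Real.sqrt_one] at h3


lemma radial_eq (m : ℕ) :
    ∫ r in Set.Ioi (0:ℝ), r ^ m * (1 + r^2) ^ (-(((m:ℝ)+2)/2)) = Wal m := by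
  have hsub : Ioo (0:ℝ) (π/2) ⊆ Ioo (-(π/2)) (π/2) :=
    Ioo_subset_Ioo (by linarith [Real.pi_pos]) le_rfl
  have hcos : ∀ x ∈ Ioo (0:ℝ) (π/2), 0 < Real.cos x := fun x hx =>
    Real.cos_pos_of_mem_Ioo (hsub hx)
  have himg : Real.tan '' Ioo (0:ℝ) (π/2) = Ioi 0 := by
    apply Set.eq_of_subset_of_subset
    · rintro y ⟨x, hx, rfl⟩
      exact Real.tan_pos_of_pos_of_lt_pi_div_two hx.1 hx.2
    · intro y hy
      refine ⟨Real.arctan y, ⟨?_, Real.arctan_lt_pi_div_two y⟩, Real.tan_arctan y⟩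
      have := Real.arctan_strictMono (show (0:ℝ) < y from hy)
      rwa [Real.arctan_zero] at this
  have hderiv : ∀ x ∈ Ioo (0:ℝ) (π/2),
      HasDerivWithinAt Real.tan (1 / Real.cos x ^ 2) (Ioo (0:ℝ) (π/2)) x := fun x hx =>
    (Real.hasDerivAt_tan (hcos x hx).ne').hasDerivWithinAt
  have hinj : InjOn Real.tan (Ioo (0:ℝ) (π/2)) := Real.injOn_tan.mono hsub
  have key := integral_image_eq_integral_abs_deriv_smul measurableSet_Ioo hderiv hinj
    (fun r => r ^ m * (1 + r^2) ^ (-(((m:ℝ)+2)/2)))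
  rw [himg] at key
  rw [key]
  have hcong : ∀ x ∈ Ioo (0:ℝ) (π/2),
      |1 / Real.cos x ^ 2| • (Real.tan x ^ m * (1 + Real.tan x ^2) ^ (-(((m:ℝ)+2)/2)))
        = Real.sin x ^ m := by
    intro x hx
    have hc := hcos x hx
    have h1 : (1 + Real.tan x ^ 2) = (Real.cos x ^ 2)⁻¹ := by
      rw [← Real.inv_one_add_tan_sq hc.ne', inv_inv]
    have h2 : ((Real.cos x ^ 2)⁻¹ : ℝ) ^ (-(((m:ℝ)+2)/2)) = Real.cos x ^ (m+2) := by
      rw [← Real.rpow_neg_one (Real.cos x ^ 2), ← Real.rpow_natCast (Real.cos x) 2,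
        ← Real.rpow_mul hc.le, ← Real.rpow_mul hc.le]
      rw [show ((2:ℕ):ℝ) * (-1) * (-(((m:ℝ)+2)/2)) = ((m:ℝ)+2) by push_cast; ring]
      rw [show ((m:ℝ)+2) = (((m+2:ℕ)):ℝ) by push_cast; ring, Real.rpow_natCast]
    rw [h1, h2, Real.tan_eq_sin_div_cos, abs_of_pos (by positivity), smul_eq_mul, div_pow]
    rw [show Real.cos x ^ (m+2) = Real.cos x ^ m * Real.cos x ^ 2 by ring]
    field_simp
  rw [MeasureTheory.setIntegral_congr_fun measurableSet_Ioo hcong, Wal,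
    intervalIntegral.integral_of_le (by positivity), MeasureTheory.integral_Ioc_eq_integral_Ioo]


lemma cJ_eq {n : ℕ} (hn : 1 ≤ n) :
    (Real.Gamma (((n:ℝ)+1)/2) / π ^ (((n:ℝ)+1)/2)) *
      ((n:ℝ) * (Real.sqrt π ^ n / Real.Gamma ((n:ℝ)/2 + 1)) * Wal (n-1)) = 1 := by
  obtain ⟨m, rfl⟩ : ∃ m, n = m + 1 := ⟨n - 1, (Nat.succ_pred_eq_of_pos hn).symm⟩
  have hWal : Wal m = Real.sqrt π * Real.Gamma (((m:ℝ)+1)/2) / (2 * Real.Gamma (((m:ℝ)+2)/2)) :=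
    Wal_gamma m
  have hG1 : Real.Gamma (((m+1:ℕ):ℝ)/2 + 1) = (((m:ℝ)+1)/2) * Real.Gamma (((m:ℝ)+1)/2) := by
    rw [show (((m+1:ℕ):ℝ))/2 + 1 = ((m:ℝ)+1)/2 + 1 by push_cast; ring]
    exact Real.Gamma_add_one (by positivity)
  have hpow : Real.sqrt π ^ (m+1) * Real.sqrt π = π ^ (((m:ℝ)+1+1)/2) := by
    rw [← pow_succ, Real.sqrt_eq_rpow, ← Real.rpow_natCast (π ^ ((1:ℝ)/2)) (m+2),
      ← Real.rpow_mul Real.pi_pos.le]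
    congr 1
    push_cast; ring
  have e1 : 0 < Real.Gamma (((m:ℝ)+1)/2) := Real.Gamma_pos_of_pos (by positivity)
  have e2 : 0 < Real.Gamma (((m:ℝ)+2)/2) := Real.Gamma_pos_of_pos (by positivity)
  rw [Nat.add_sub_cancel, hWal, hG1,
    show Real.Gamma (((((m+1:ℕ)):ℝ)+1)/2) = Real.Gamma (((m:ℝ)+2)/2) by congr 1; push_cast; ring]
  rw [show ((((m+1:ℕ)):ℝ)) = (m:ℝ)+1 by push_cast; ring]
  field_simp
  linear_combination hpow


section KernelLemmas
variable {n : ℕ} {t : ℝ}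
local notation "E" => EuclideanSpace ℝ (Fin n)

lemma gamma_pos (n : ℕ) : 0 < Real.Gamma (((n:ℝ)+1)/2) := Real.Gamma_pos_of_pos (by positivity)

lemma K_nonneg (ht : 0 < t) (z : E) : 0 ≤ poissonKernelRn n t z := by
  have h1 := gamma_pos n
  have h2 : (0:ℝ) < t^2 + ‖z‖^2 := by positivity
  unfold poissonKernelRn
  positivity

lemma K_cont (ht : 0 < t) : Continuous (poissonKernelRn n t) := by
  unfold poissonKernelRn
  apply Continuous.div continuous_const
  · exact Continuous.rpow_const (by continuity) (fun z => Or.inr (by positivity))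
  · intro z
    exact (Real.rpow_pos_of_pos (by positivity) _).ne'

lemma K_le (ht : 0 < t) (z : E) :
    poissonKernelRn n t z ≤ (Real.Gamma (((n:ℝ)+1)/2) / π ^ (((n:ℝ)+1)/2)) * t *
      (min (t^2) 1 / 2) ^ (-(((n:ℝ)+1)/2)) * (1+‖z‖) ^ (-((n:ℝ)+1)) := by
  set s : ℝ := ((n:ℝ)+1)/2 with hs
  set a : ℝ := min (t^2) 1 with ha
  have hapos : 0 < a := by positivity
  have hzn : (0:ℝ) ≤ ‖z‖ := norm_nonneg z
  have h2 : a/2*(1+‖z‖)^2 ≤ t^2+‖z‖^2 := by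
    have h3 : a ≤ t^2 := min_le_left _ _
    have h4 : a ≤ 1 := min_le_right _ _
    nlinarith [sq_nonneg (1-‖z‖), sq_nonneg ‖z‖]
  have h2s : ((1+‖z‖:ℝ)) ^ ((n:ℝ)+1) = ((1+‖z‖)^2) ^ s := by
    rw [← Real.rpow_natCast (1+‖z‖) 2, ← Real.rpow_mul (by positivity)]
    congr 1
    push_cast; ring
  have hD : (a/2) ^ s * (1+‖z‖) ^ ((n:ℝ)+1) ≤ (t^2+‖z‖^2) ^ s := by
    rw [h2s, ← Real.mul_rpow (by positivity) (by positivity)]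
    exact Real.rpow_le_rpow (by positivity) h2 (by positivity)
  have hc : (0:ℝ) ≤ Real.Gamma (((n:ℝ)+1)/2) / π ^ s * t := by
    have := gamma_pos n; positivity
  unfold poissonKernelRn
  rw [Real.rpow_neg (by positivity : (0:ℝ) ≤ a/2), Real.rpow_neg (by positivity : (0:ℝ) ≤ 1+‖z‖)]
  rw [div_eq_mul_inv (_ * t)]
  calc Real.Gamma (((n:ℝ)+1)/2) / π ^ s * t * ((t^2+‖z‖^2) ^ s)⁻¹
      ≤ Real.Gamma (((n:ℝ)+1)/2) / π ^ s * t * ((a/2) ^ s * (1+‖z‖) ^ ((n:ℝ)+1))⁻¹ := by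
        apply mul_le_mul_of_nonneg_left _ hc
        apply inv_anti₀ (by positivity) hD
    _ = Real.Gamma (((n:ℝ)+1)/2) / π ^ s * t * ((a/2) ^ s)⁻¹ * ((1+‖z‖) ^ ((n:ℝ)+1))⁻¹ := by
        rw [mul_inv]; ring

lemma integrable_K (hn : 1 ≤ n) (ht : 0 < t) : Integrable (poissonKernelRn n t) := by
  have hr : ((Module.finrank ℝ E : ℝ)) < (n:ℝ)+1 := by
    rw [finrank_euclideanSpace_fin]; exact lt_add_one _
  have hint := integrable_one_add_norm (μ := (volume : Measure E)) hr
  apply Integrable.mono' (hint.const_mul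
    ((Real.Gamma (((n:ℝ)+1)/2) / π ^ (((n:ℝ)+1)/2)) * t * (min (t^2) 1 / 2) ^ (-(((n:ℝ)+1)/2))))
    (K_cont ht).aestronglyMeasurable
  filter_upwards with z
  rw [Real.norm_eq_abs, abs_of_nonneg (K_nonneg ht z)]
  exact K_le ht z


lemma J_eq (hn : 1 ≤ n) :
    ∫ z : E, (1+‖z‖^2) ^ (-(((n:ℝ)+1)/2)) =
      (n:ℝ) * (Real.sqrt π ^ n / Real.Gamma ((n:ℝ)/2 + 1)) * Wal (n-1) := by
  haveI : Nonempty (Fin n) := Fin.pos_iff_nonempty.mp hn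
  haveI : Nontrivial E := by
    apply Module.nontrivial_of_finrank_pos (R := ℝ) (M := E)
    rw [finrank_euclideanSpace_fin]; exact hn
  have key := integral_fun_norm_addHaar (volume : Measure E)
    (fun r : ℝ => (1+r^2) ^ (-(((n:ℝ)+1)/2)))
  rw [finrank_euclideanSpace_fin] at key
  have hω : (volume (Metric.ball (0:E) 1)).toReal = Real.sqrt π ^ n / Real.Gamma ((n:ℝ)/2 + 1) := by
    rw [EuclideanSpace.volume_ball]
    simp only [Fintype.card_fin, ENNReal.ofReal_one, one_pow, one_mul]
    rw [ENNReal.toReal_ofReal]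
    have := Real.Gamma_pos_of_pos (show (0:ℝ) < (n:ℝ)/2 + 1 by positivity)
    positivity
  obtain ⟨m, rfl⟩ : ∃ m, n = m + 1 := ⟨n - 1, (Nat.succ_pred_eq_of_pos hn).symm⟩
  have hexp : -(((m+1:ℕ):ℝ)+1)/2 = -(((m:ℝ)+2)/2) := by push_cast; ring
  have hrad : ∫ y in Set.Ioi (0:ℝ), y ^ ((m+1) - 1) • (1+y^2) ^ (-((((m+1:ℕ):ℝ)+1)/2)) = Wal m := by
    rw [← radial_eq m]
    apply setIntegral_congr_fun measurableSet_Ioi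
    intro y hy
    simp only [smul_eq_mul, Nat.add_sub_cancel]
    congr 2
    push_cast; ring
  rw [key, measureReal_def, hω, hrad]
  simp only [nsmul_eq_mul, smul_eq_mul, Nat.add_sub_cancel]
  push_cast
  ring

lemma scaled_eq (hn : 1 ≤ n) (ht : 0 < t) :
    ∫ z : E, (t^2+‖z‖^2) ^ (-(((n:ℝ)+1)/2)) =
      (∫ z : E, (1+‖z‖^2) ^ (-(((n:ℝ)+1)/2))) / t := by
  set s : ℝ := ((n:ℝ)+1)/2 with hs
  have key := MeasureTheory.Measure.integral_comp_smul (volume : Measure E)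
    (fun z : E => (1+‖z‖^2) ^ (-s)) t⁻¹
  rw [finrank_euclideanSpace_fin] at key
  have hpt : ∀ z : E, (1+‖t⁻¹ • z‖^2) ^ (-s) = t^(n+1) * (t^2+‖z‖^2) ^ (-s) := by
    intro z
    have h1 : ‖t⁻¹ • z‖ = t⁻¹ * ‖z‖ := by
      rw [norm_smul, Real.norm_eq_abs, abs_of_pos (by positivity)]
    have h2 : (1 : ℝ) + (t⁻¹*‖z‖)^2 = (t^2)⁻¹ * (t^2+‖z‖^2) := by
      field_simp
    rw [h1, h2, Real.mul_rpow (by positivity) (by positivity)]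
    congr 1
    rw [← Real.rpow_neg_one (t^2), ← Real.rpow_natCast t 2, ← Real.rpow_mul ht.le,
      ← Real.rpow_mul ht.le, ← Real.rpow_natCast t (n+1)]
    congr 1
    push_cast [hs]; ring
  simp only [hpt] at key
  rw [MeasureTheory.integral_const_mul] at key
  have habs : |((t⁻¹ ^ n)⁻¹ : ℝ)| = t^n := by
    rw [← inv_pow, inv_inv, abs_of_pos (by positivity)]
  rw [habs, smul_eq_mul] at key
  rw [pow_succ, mul_assoc] at key
  have h2 := mul_left_cancel₀ (pow_ne_zero n ht.ne') key
  rw [eq_div_iff ht.ne']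
  linarith [h2]

lemma integral_K (hn : 1 ≤ n) (ht : 0 < t) : ∫ z : E, poissonKernelRn n t z = 1 := by
  set s : ℝ := ((n:ℝ)+1)/2 with hs
  set c : ℝ := Real.Gamma (((n:ℝ)+1)/2) / π ^ s with hc
  have hker : ∀ z : E, poissonKernelRn n t z = (c * t) * (t^2+‖z‖^2) ^ (-s) := by
    intro z
    rw [poissonKernelRn, Real.rpow_neg (by positivity), div_eq_mul_inv]
  simp only [hker]
  rw [MeasureTheory.integral_const_mul, scaled_eq hn ht, J_eq hn]
  have hX : (c * t) * (((n:ℝ) * (Real.sqrt π ^ n / Real.Gamma ((n:ℝ)/2+1)) * Wal (n-1)) / t)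
      = c * ((n:ℝ) * (Real.sqrt π ^ n / Real.Gamma ((n:ℝ)/2+1)) * Wal (n-1)) := by
    field_simp
  rw [hX]
  exact cJ_eq hn

lemma const_bound (hn : 1 ≤ n) :
    (Real.Gamma (((n:ℝ)+1)/2) / π ^ (((n:ℝ)+1)/2)) *
      ((n:ℝ) * (Real.sqrt π ^ n / Real.Gamma ((n:ℝ)/2 + 1))) ≤ Real.sqrt n := by
  have hcj := cJ_eq (n := n) hn
  have hW : 1 / Real.sqrt n ≤ Wal (n-1) := by
    have h := Wal_ge (n-1)
    rwa [show (((n-1:ℕ)):ℝ) + 1 = (n:ℝ) by rw [Nat.cast_sub hn]; push_cast; ring] at h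
  have hsn : 0 < Real.sqrt n := Real.sqrt_pos.2 (by exact_mod_cast hn)
  have hW0 : 0 < Wal (n-1) := lt_of_lt_of_le (by positivity) hW
  set C := (Real.Gamma (((n:ℝ)+1)/2) / π ^ (((n:ℝ)+1)/2)) *
      ((n:ℝ) * (Real.sqrt π ^ n / Real.Gamma ((n:ℝ)/2 + 1))) with hC
  have h1 : C * Wal (n-1) = 1 := by rw [hC]; linear_combination hcj
  have h2 : 1 ≤ Real.sqrt n * Wal (n-1) := by
    calc (1:ℝ) = Real.sqrt n * (1/Real.sqrt n) := by field_simp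
    _ ≤ Real.sqrt n * Wal (n-1) := mul_le_mul_of_nonneg_left hW hsn.le
  have h3 : C = 1 / Wal (n-1) := by rw [eq_div_iff hW0.ne']; exact h1
  rw [h3, div_le_iff₀ hW0]
  linarith [h2]

lemma tail_K (hn : 1 ≤ n) (ht : 0 < t) :
    ∫ z in {z : E | 1/4 < ‖z‖}, poissonKernelRn n t z ≤ 4 * t * Real.sqrt n := by
  haveI : Nonempty (Fin n) := Fin.pos_iff_nonempty.mp hn
  haveI : Nontrivial E := by
    apply Module.nontrivial_of_finrank_pos (R := ℝ) (M := E)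
    rw [finrank_euclideanSpace_fin]; exact hn
  set s : ℝ := ((n:ℝ)+1)/2 with hs
  set c : ℝ := Real.Gamma (((n:ℝ)+1)/2) / π ^ s with hcdef
  have hc : 0 < c := div_pos (gamma_pos n) (Real.rpow_pos_of_pos Real.pi_pos _)
  have hS : MeasurableSet {z : E | 1/4 < ‖z‖} :=
    measurableSet_lt measurable_const continuous_norm.measurable
  set maj : E → ℝ := fun z => c * t * ‖z‖ ^ (-((n:ℝ)+1)) with hmaj
  have hmaj_eq : maj = fun z : E => c*t*((‖z‖ ^ ((n:ℝ)+1))⁻¹) := by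
    funext z
    simp only [hmaj, Real.rpow_neg (norm_nonneg z)]
  have hmaj_meas : AEStronglyMeasurable maj (volume : Measure E) := by
    rw [hmaj_eq]
    exact ((((continuous_norm.rpow_const
      (fun z => Or.inr (by positivity))).measurable).inv).const_mul _).aestronglyMeasurable
  have hptS : ∀ z ∈ {z : E | 1/4 < ‖z‖}, poissonKernelRn n t z ≤ maj z := by
    intro z hz
    have hz0 : (0:ℝ) < ‖z‖ := lt_trans (by norm_num) hz
    have h1 : ((‖z‖:ℝ)^2) ^ s ≤ (t^2+‖z‖^2) ^ s :=
      Real.rpow_le_rpow (by positivity) (by nlinarith) (by positivity)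
    have h2 : ((‖z‖:ℝ)^2) ^ s = ‖z‖ ^ ((n:ℝ)+1) := by
      rw [← Real.rpow_natCast ‖z‖ 2, ← Real.rpow_mul hz0.le]
      congr 1; push_cast [hs]; ring
    calc poissonKernelRn n t z = c * t / (t^2+‖z‖^2) ^ s := rfl
      _ ≤ c * t / (((‖z‖:ℝ)^2) ^ s) := by
          apply div_le_div_of_nonneg_left (by positivity) (by positivity) h1
      _ = maj z := by
          simp only [hmaj]
          rw [h2, Real.rpow_neg hz0.le, div_eq_mul_inv]
  have hint : IntegrableOn maj {z : E | 1/4 < ‖z‖} volume := by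
    have hr : ((Module.finrank ℝ E : ℝ)) < (n:ℝ)+1 := by
      rw [finrank_euclideanSpace_fin]; exact lt_add_one _
    have h5 := ((integrable_one_add_norm (μ := (volume : Measure E)) hr).const_mul
      (c*t*5^((n:ℝ)+1))).integrableOn (s := {z : E | 1/4 < ‖z‖})
    apply Integrable.mono' h5 hmaj_meas.restrict
    rw [ae_restrict_iff' hS]
    filter_upwards with z hz
    have hz0 : (0:ℝ) < ‖z‖ := lt_trans (by norm_num) hz
    rw [Real.norm_eq_abs, abs_of_nonneg (by positivity)]
    have h15 : (1+‖z‖)/5 ≤ ‖z‖ := by linarith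
    have h3 : ‖z‖ ^ (-((n:ℝ)+1)) ≤ ((1+‖z‖)/5) ^ (-((n:ℝ)+1)) :=
      Real.rpow_le_rpow_of_nonpos (by positivity) h15 (neg_nonpos.mpr (by positivity))
    have h4 : ((1+‖z‖)/5 : ℝ) ^ (-((n:ℝ)+1)) = 5^((n:ℝ)+1) * (1+‖z‖) ^ (-((n:ℝ)+1)) := by
      rw [Real.div_rpow (by positivity) (by norm_num : (0:ℝ) ≤ 5),
        Real.rpow_neg (by norm_num : (0:ℝ) ≤ 5), div_eq_mul_inv, inv_inv]
      ring
    calc c*t*‖z‖^(-((n:ℝ)+1)) ≤ c*t*(5^((n:ℝ)+1) * (1+‖z‖)^(-((n:ℝ)+1))) :=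
        mul_le_mul_of_nonneg_left (h3.trans_eq h4) (by positivity)
      _ = c*t*5^((n:ℝ)+1) * (1+‖z‖)^(-((n:ℝ)+1)) := by ring
  have hmono : ∫ z in {z : E | 1/4 < ‖z‖}, poissonKernelRn n t z
      ≤ ∫ z in {z : E | 1/4 < ‖z‖}, maj z :=
    setIntegral_mono_on ((integrable_K hn ht).integrableOn) hint hS hptS
  have hval : ∫ z in {z : E | 1/4 < ‖z‖}, maj z
      = c*t*((n:ℝ) * ((Real.sqrt π ^ n / Real.Gamma ((n:ℝ)/2 + 1)) * 4)) := by
    have hind : (fun z : E => Set.indicator {z : E | 1/4 < ‖z‖} maj z)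
        = fun z : E => if (1/4:ℝ) < ‖z‖ then c*t*‖z‖^(-((n:ℝ)+1)) else 0 := by
      funext z
      by_cases h : (1/4:ℝ) < ‖z‖ <;> simp [Set.indicator, h, hmaj]
    have key := integral_fun_norm_addHaar (volume : Measure E)
      (fun r : ℝ => if (1/4:ℝ) < r then c*t*r^(-((n:ℝ)+1)) else 0)
    rw [finrank_euclideanSpace_fin] at key
    rw [← MeasureTheory.integral_indicator hS, hind, key]
    have hω : (volume (Metric.ball (0:E) 1)).toReal
        = Real.sqrt π ^ n / Real.Gamma ((n:ℝ)/2 + 1) := by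
      rw [EuclideanSpace.volume_ball]
      simp only [Fintype.card_fin, ENNReal.ofReal_one, one_pow, one_mul]
      rw [ENNReal.toReal_ofReal]
      have := Real.Gamma_pos_of_pos (show (0:ℝ) < (n:ℝ)/2 + 1 by positivity)
      positivity
    have hin : ∫ y in Ioi (0:ℝ), y ^ (n-1) • (if (1/4:ℝ) < y then c*t*y^(-((n:ℝ)+1)) else 0)
        = c*t*4 := by
      have heq : (fun y : ℝ => y ^ (n-1) • (if (1/4:ℝ) < y then c*t*y^(-((n:ℝ)+1)) else 0))
          = Set.indicator (Ioi (1/4:ℝ)) (fun y => y ^ (n-1) * (c*t*y^(-((n:ℝ)+1)))) := by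
        funext y
        by_cases h : (1/4:ℝ) < y <;> simp [Set.indicator, h, mem_Ioi, smul_eq_mul]
      rw [heq, MeasureTheory.integral_indicator measurableSet_Ioi, Measure.restrict_restrict measurableSet_Ioi,
        Set.inter_eq_self_of_subset_left (Ioi_subset_Ioi (by norm_num))]
      have hcong2 : ∀ y ∈ Ioi (1/4:ℝ), y ^ (n-1) * (c*t*y^(-((n:ℝ)+1))) = (c*t) * y ^ (-2:ℝ) := by
        intro y hy
        have hy0 : (0:ℝ) < y := lt_trans (by norm_num) hy
        have hyy : (y:ℝ) ^ (n-1) * y ^ (-((n:ℝ)+1)) = y ^ (-2:ℝ) := by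
          rw [← Real.rpow_natCast y (n-1), ← Real.rpow_add hy0]
          congr 1
          rw [Nat.cast_sub hn]
          push_cast; ring
        calc y ^ (n-1) * (c*t*y^(-((n:ℝ)+1))) = c*t*(y ^ (n-1) * y^(-((n:ℝ)+1))) := by ring
        _ = c*t*y^(-2:ℝ) := by rw [hyy]
      rw [setIntegral_congr_fun measurableSet_Ioi hcong2, MeasureTheory.integral_const_mul _ _,
        integral_Ioi_rpow_of_lt (by norm_num) (by norm_num : (0:ℝ) < 1/4)]
      rw [show ((-2:ℝ)+1) = -1 by norm_num, Real.rpow_neg_one]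
      norm_num
    rw [measureReal_def, hω, hin]
    simp only [nsmul_eq_mul, smul_eq_mul]
    ring
  have hcb := const_bound (n := n) hn
  calc ∫ z in {z : E | 1/4 < ‖z‖}, poissonKernelRn n t z
      ≤ c*t*((n:ℝ) * ((Real.sqrt π ^ n / Real.Gamma ((n:ℝ)/2 + 1)) * 4)) :=
        hmono.trans (le_of_eq hval)
    _ = 4*t*(c*((n:ℝ) * (Real.sqrt π ^ n / Real.Gamma ((n:ℝ)/2 + 1)))) := by ring
    _ ≤ 4*t*Real.sqrt n := mul_le_mul_of_nonneg_left hcb (by positivity)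

end KernelLemmas
end Helpers

set_option maxHeartbeats 1000000 in
/-- If the norm `nX` on `ℝⁿ` is in John position (`‖x‖₂/√n ≤ ‖x‖_X ≤ ‖x‖₂`), and
`F : ℝⁿ → Y` is `6`-Lipschitz on `ℝⁿ` and `(1+ε)`-Lipschitz on `(1/2)B_X`, then for
`0 < t < ε/(25√n)` the evolute `P_t * F` is `(1+2ε)`-Lipschitz on `(1/4)B_X`. -/
theorem poisson_evolute_lipschitz (n : ℕ) (hn : 1 ≤ n) {Y : Type*}
    [NormedAddCommGroup Y] [NormedSpace ℝ Y] [CompleteSpace Y]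
    (nX : EuclideanSpace ℝ (Fin n) → ℝ)
    (hX0 : ∀ x, nX x = 0 ↔ x = 0)
    (hXadd : ∀ x y, nX (x + y) ≤ nX x + nX y)
    (hXsmul : ∀ (c : ℝ) x, nX (c • x) = |c| * nX x)
    (hJohn : ∀ x : EuclideanSpace ℝ (Fin n), ‖x‖ / Real.sqrt n ≤ nX x ∧ nX x ≤ ‖x‖)
    (ε : ℝ) (hε : ε ∈ Set.Ioo (0 : ℝ) 1)
    (F : EuclideanSpace ℝ (Fin n) → Y)
    (hLip : ∀ x y, ‖F x - F y‖ ≤ 6 * nX (x - y))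
    (hLipHalf : ∀ x y, nX x ≤ 1 / 2 → nX y ≤ 1 / 2 → ‖F x - F y‖ ≤ (1 + ε) * nX (x - y))
    (t : ℝ) (ht : 0 < t) (ht' : t < ε / (25 * Real.sqrt n)) :
    ∀ x y, nX x ≤ 1 / 4 → nX y ≤ 1 / 4 →
      ‖poissonConv n t F x - poissonConv n t F y‖ ≤ (1 + 2 * ε) * nX (x - y) := by
  intro x y hx hy
  have hε0 := hε.1
  have hsqn : 0 < Real.sqrt n := Real.sqrt_pos.2 (by exact_mod_cast hn)
  have hnX_nonneg : ∀ z, 0 ≤ nX z := fun z =>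
    le_trans (by positivity) (hJohn z).1
  have hd0 : 0 ≤ nX (x - y) := hnX_nonneg _
  have hnX_neg : ∀ z, nX (-z) = nX z := by
    intro z
    have h := hXsmul (-1) z
    rw [neg_one_smul] at h
    simpa using h
  have hFcont : Continuous F := by
    apply LipschitzWith.continuous (K := 6)
    apply LipschitzWith.of_dist_le_mul
    intro a b
    rw [dist_eq_norm, dist_eq_norm]
    calc ‖F a - F b‖ ≤ 6 * nX (a - b) := hLip a b
      _ ≤ 6 * ‖a - b‖ := by nlinarith [(hJohn (a-b)).2, hnX_nonneg (a-b)]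
  have hnXcont : Continuous nX := by
    apply LipschitzWith.continuous (K := 1)
    apply LipschitzWith.of_dist_le_mul
    intro a b
    rw [Real.dist_eq, dist_eq_norm, NNReal.coe_one, one_mul]
    have h1 : nX a ≤ nX (a - b) + nX b := by
      have := hXadd (a - b) b; rwa [sub_add_cancel] at this
    have h2 : nX b ≤ nX (a - b) + nX a := by
      have := hXadd (b - a) a
      rw [sub_add_cancel] at this
      rwa [show b - a = -(a-b) by abel, hnX_neg] at this
    have h3 : nX (a - b) ≤ ‖a - b‖ := (hJohn _).2
    rw [abs_le]; constructor <;> linarith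
  have hKnn := fun w => K_nonneg (n := n) ht w
  have hKint := integrable_K (n := n) hn ht
  have hconv : ∀ w : EuclideanSpace ℝ (Fin n), poissonConv n t F w
      = ∫ z, poissonKernelRn n t z • F (w - z) := by
    intro w
    rw [poissonConv]
    have h := MeasureTheory.integral_sub_left_eq_self
      (fun u : EuclideanSpace ℝ (Fin n) => poissonKernelRn n t u • F (w - u)) volume w
    simp only [sub_sub_cancel] at h
    exact h
  have hDnorm : ∀ w : EuclideanSpace ℝ (Fin n),
      ‖poissonKernelRn n t w • (F (x - w) - F (y - w))‖
        = poissonKernelRn n t w * ‖F (x - w) - F (y - w)‖ := by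
    intro w
    rw [norm_smul, Real.norm_eq_abs, abs_of_nonneg (hKnn w)]
  have hbound6 : ∀ w : EuclideanSpace ℝ (Fin n),
      ‖poissonKernelRn n t w • (F (x - w) - F (y - w))‖ ≤ 6 * nX (x - y) * poissonKernelRn n t w := by
    intro w
    rw [hDnorm]
    have h := hLip (x - w) (y - w)
    rw [show (x - w) - (y - w) = x - y by abel] at h
    nlinarith [hKnn w, hnX_nonneg (x - y)]
  have hDcont : Continuous fun w : EuclideanSpace ℝ (Fin n) =>
      poissonKernelRn n t w • (F (x - w) - F (y - w)) := by
    apply Continuous.smul (K_cont ht)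
    exact (hFcont.comp (continuous_const.sub continuous_id)).sub
      (hFcont.comp (continuous_const.sub continuous_id))
  have hDint : Integrable fun w : EuclideanSpace ℝ (Fin n) =>
      poissonKernelRn n t w • (F (x - w) - F (y - w)) := by
    apply Integrable.mono' (hKint.const_mul (6 * nX (x - y))) hDcont.aestronglyMeasurable
    filter_upwards with w
    exact hbound6 w
  by_cases hGx : Integrable (fun w : EuclideanSpace ℝ (Fin n) => poissonKernelRn n t w • F (x - w)) volume
  · -- integrable case
    have hGy : Integrable (fun w : EuclideanSpace ℝ (Fin n) => poissonKernelRn n t w • F (y - w)) volume := by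
      have heq : (fun w : EuclideanSpace ℝ (Fin n) => poissonKernelRn n t w • F (y - w))
          = fun w => (poissonKernelRn n t w • F (x - w)) -
              poissonKernelRn n t w • (F (x - w) - F (y - w)) := by
        funext w; rw [smul_sub]; abel
      rw [heq]
      exact hGx.sub hDint
    rw [hconv x, hconv y, ← MeasureTheory.integral_sub hGx hGy]
    have hsub : (fun w : EuclideanSpace ℝ (Fin n) =>
        poissonKernelRn n t w • F (x - w) - poissonKernelRn n t w • F (y - w))
        = fun w => poissonKernelRn n t w • (F (x - w) - F (y - w)) := by
      funext w; rw [smul_sub]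
    rw [hsub]
    -- bound function
    have hSmeas : MeasurableSet {w : EuclideanSpace ℝ (Fin n) | nX w ≤ 1/4} :=
      measurableSet_le hnXcont.measurable measurable_const
    set B : EuclideanSpace ℝ (Fin n) → ℝ :=
      fun w => (if nX w ≤ 1/4 then (1+ε) * nX (x - y) else 6 * nX (x - y)) * poissonKernelRn n t w
      with hB
    have hptB : ∀ w, ‖poissonKernelRn n t w • (F (x - w) - F (y - w))‖ ≤ B w := by
      intro w
      simp only [hB]
      by_cases h : nX w ≤ 1/4
      · rw [if_pos h, hDnorm]
        have hxw : nX (x - w) ≤ 1/2 := by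
          have := hXadd x (-w)
          rw [← sub_eq_add_neg, hnX_neg] at this
          linarith
        have hyw : nX (y - w) ≤ 1/2 := by
          have := hXadd y (-w)
          rw [← sub_eq_add_neg, hnX_neg] at this
          linarith
        have h2 := hLipHalf (x - w) (y - w) hxw hyw
        rw [show (x - w) - (y - w) = x - y by abel] at h2
        nlinarith [hKnn w, hnX_nonneg (x - y)]
      · rw [if_neg h]
        calc ‖poissonKernelRn n t w • (F (x - w) - F (y - w))‖
            ≤ 6 * nX (x - y) * poissonKernelRn n t w := hbound6 w
          _ = _ := by ring
    have hBint : Integrable B := by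
      apply Integrable.mono' (hKint.const_mul ((6 + (1+ε)) * nX (x - y)))
      · exact ((Measurable.ite hSmeas measurable_const measurable_const).mul
          (K_cont ht).measurable).aestronglyMeasurable
      · filter_upwards with w
        simp only [hB, Real.norm_eq_abs]
        by_cases h : nX w ≤ 1/4
        · rw [if_pos h, abs_of_nonneg (mul_nonneg (mul_nonneg (by linarith) hd0) (hKnn w))]
          nlinarith [hKnn w, hd0, hε0, mul_nonneg hd0 (hKnn w)]
        · rw [if_neg h, abs_of_nonneg (mul_nonneg (mul_nonneg (by norm_num) hd0) (hKnn w))]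
          nlinarith [hKnn w, hd0, hε0, mul_nonneg hd0 (hKnn w), mul_nonneg (mul_nonneg hε0.le hd0) (hKnn w)]
    have hSint_le : ∫ w in {w : EuclideanSpace ℝ (Fin n) | nX w ≤ 1/4}, poissonKernelRn n t w ≤ 1 := by
      calc ∫ w in {w : EuclideanSpace ℝ (Fin n) | nX w ≤ 1/4}, poissonKernelRn n t w
          ≤ ∫ w, poissonKernelRn n t w :=
            setIntegral_le_integral hKint (Filter.Eventually.of_forall hKnn)
        _ = 1 := integral_K hn ht
    have hSint_nn : 0 ≤ ∫ w in {w : EuclideanSpace ℝ (Fin n) | nX w ≤ 1/4}, poissonKernelRn n t w :=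
      setIntegral_nonneg hSmeas (fun w _ => hKnn w)
    have hTnn : 0 ≤ ∫ w in {w : EuclideanSpace ℝ (Fin n) | nX w ≤ 1/4}ᶜ, poissonKernelRn n t w :=
      setIntegral_nonneg hSmeas.compl (fun w _ => hKnn w)
    have htail : ∫ w in {w : EuclideanSpace ℝ (Fin n) | nX w ≤ 1/4}ᶜ, poissonKernelRn n t w
        ≤ 4*t*Real.sqrt n := by
      have hsub2 : {w : EuclideanSpace ℝ (Fin n) | nX w ≤ 1/4}ᶜ
          ⊆ {w : EuclideanSpace ℝ (Fin n) | 1/4 < ‖w‖} := by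
        intro w hw
        simp only [Set.mem_compl_iff, Set.mem_setOf_eq, not_le] at hw ⊢
        exact lt_of_lt_of_le hw (hJohn w).2
      calc ∫ w in {w : EuclideanSpace ℝ (Fin n) | nX w ≤ 1/4}ᶜ, poissonKernelRn n t w
          ≤ ∫ w in {w : EuclideanSpace ℝ (Fin n) | 1/4 < ‖w‖}, poissonKernelRn n t w :=
            setIntegral_mono_set hKint.integrableOn
              (Filter.Eventually.of_forall hKnn) (HasSubset.Subset.eventuallyLE hsub2)
        _ ≤ 4*t*Real.sqrt n := tail_K hn ht
    have hBsplit : ∫ w, B w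
        = (1+ε) * nX (x-y) * (∫ w in {w : EuclideanSpace ℝ (Fin n) | nX w ≤ 1/4}, poissonKernelRn n t w)
          + 6 * nX (x-y) * (∫ w in {w : EuclideanSpace ℝ (Fin n) | nX w ≤ 1/4}ᶜ, poissonKernelRn n t w) := by
      rw [← MeasureTheory.integral_add_compl hSmeas hBint]
      congr 1
      · rw [MeasureTheory.setIntegral_congr_fun hSmeas
          (g := fun w => ((1+ε) * nX (x-y)) * poissonKernelRn n t w)
          (fun w hw => by simp only [hB]; rw [if_pos (show nX w ≤ 1/4 from hw)]),
          MeasureTheory.integral_const_mul]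
      · rw [MeasureTheory.setIntegral_congr_fun hSmeas.compl
          (g := fun w => (6 * nX (x-y)) * poissonKernelRn n t w)
          (fun w hw => by simp only [hB]; rw [if_neg (show ¬ nX w ≤ 1/4 from hw)]),
          MeasureTheory.integral_const_mul]
    have h25 : t * Real.sqrt n < ε / 25 := by
      rw [lt_div_iff₀ (by positivity)] at ht'
      nlinarith
    have ha1 : (0:ℝ) ≤ (1+ε) * nX (x-y) := mul_nonneg (by linarith) hd0
    have h1 := mul_le_mul_of_nonneg_left hSint_le ha1
    have h2 := mul_le_mul_of_nonneg_left htail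
      (mul_nonneg (by norm_num : (0:ℝ) ≤ 6) hd0)
    have h3 := mul_le_mul_of_nonneg_left h25.le
      (mul_nonneg (by norm_num : (0:ℝ) ≤ 24) hd0)
    calc ‖∫ w, poissonKernelRn n t w • (F (x - w) - F (y - w))‖
        ≤ ∫ w, ‖poissonKernelRn n t w • (F (x - w) - F (y - w))‖ :=
          norm_integral_le_integral_norm _
      _ ≤ ∫ w, B w := integral_mono hDint.norm hBint hptB
      _ = _ := hBsplit
      _ ≤ (1 + 2*ε) * nX (x - y) := by
          linarith [h1, h2, h3, mul_nonneg hd0 hε0.le]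
  · -- non-integrable case
    have hGy : ¬ Integrable (fun w : EuclideanSpace ℝ (Fin n) => poissonKernelRn n t w • F (y - w)) volume := by
      intro hGy
      apply hGx
      have heq : (fun w : EuclideanSpace ℝ (Fin n) => poissonKernelRn n t w • F (x - w))
          = fun w => (poissonKernelRn n t w • (F (x - w) - F (y - w))) +
              poissonKernelRn n t w • F (y - w) := by
        funext w; rw [smul_sub]; abel
      rw [heq]
      exact hDint.add hGy
    rw [hconv x, hconv y, MeasureTheory.integral_undef hGx, MeasureTheory.integral_undef hGy]
    simp only [sub_zero, norm_zero]
    positivity
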